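/- arXiv:math/0608197 — 4 statements merged into one kernel-verified Lean document; each statement's English description precedes it below -/
import Mathlib

section
/- Let 0 < p < 1, T > 0 and E₀ ≥ 0, let V be a real inner product space, and let γ : [0,T] → V have integrable derivative γ′ with ∫_0^T τ^p·‖γ′(τ)‖² dτ ≤ E₀. Then for all 0 ≤ τ₁ ≤ τ₂ ≤ T one has ‖γ(τ₂) − γ(τ₁)‖² ≤ (E₀/(1−p)) · (τ₂^{1−p} − τ₁^{1−p}). -/
/-!
Write `‖γ'‖ = (τ^{p/2} ‖γ'‖) · τ^{-p/2}` and apply Cauchy–Schwarz on `[τ₁, τ₂]`: the first factor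
is controlled by the weighted energy, and the second integrates to
`(τ₂^{1-p} - τ₁^{1-p}) / (1 - p)`, which is finite because `p < 1`.
-/

open MeasureTheory Set

section CauchySchwarz

variable {α : Type*} [MeasurableSpace α] {μ : Measure α}

theorem sq_integral_mul_le_integral_sq_mul_integral_sq {f g : α → ℝ}
    (hf₀ : 0 ≤ᵐ[μ] f) (hg₀ : 0 ≤ᵐ[μ] g) (hf : MemLp f 2 μ) (hg : MemLp g 2 μ) :
    (∫ a, f a * g a ∂μ) ^ 2 ≤ (∫ a, f a ^ 2 ∂μ) * ∫ a, g a ^ 2 ∂μ := by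
  have holder := integral_mul_le_Lp_mul_Lq_of_nonneg Real.HolderConjugate.two_two hf₀ hg₀
    (by simpa using hf) (by simpa using hg)
  simp only [Real.rpow_two, ← Real.sqrt_eq_rpow] at holder
  have hfg₀ : 0 ≤ ∫ a, f a * g a ∂μ :=
    integral_nonneg_of_ae (by filter_upwards [hf₀, hg₀] with a ha hb using mul_nonneg ha hb)
  calc (∫ a, f a * g a ∂μ) ^ 2 ≤ (√(∫ a, f a ^ 2 ∂μ) * √(∫ a, g a ^ 2 ∂μ)) ^ 2 := by gcongr
    _ = (∫ a, f a ^ 2 ∂μ) * ∫ a, g a ^ 2 ∂μ := by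
      rw [mul_pow, Real.sq_sqrt (integral_nonneg fun _ => sq_nonneg _),
        Real.sq_sqrt (integral_nonneg fun _ => sq_nonneg _)]

theorem sq_integral_norm_le_integral_mul_sq_norm_mul_integral_inv {E : Type*}
    [NormedAddCommGroup E] {f : α → E} {w : α → ℝ} (hf : AEStronglyMeasurable f μ)
    (hw₀ : ∀ᵐ a ∂μ, 0 < w a) (hwf : Integrable (fun a => w a * ‖f a‖ ^ 2) μ)
    (hw_inv : Integrable (fun a => (w a)⁻¹) μ) :
    (∫ a, ‖f a‖ ∂μ) ^ 2 ≤ (∫ a, w a * ‖f a‖ ^ 2 ∂μ) * ∫ a, (w a)⁻¹ ∂μ := by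
  have hw : AEStronglyMeasurable w μ := by
    simpa [Pi.inv_def] using hw_inv.aestronglyMeasurable.aemeasurable.inv.aestronglyMeasurable
  set F : α → ℝ := fun a => √(w a) * ‖f a‖
  set G : α → ℝ := fun a => (√(w a))⁻¹
  have hF_sq : ∀ᵐ a ∂μ, F a ^ 2 = w a * ‖f a‖ ^ 2 := by
    filter_upwards [hw₀] with a ha
    rw [mul_pow, Real.sq_sqrt ha.le]
  have hG_sq : ∀ᵐ a ∂μ, G a ^ 2 = (w a)⁻¹ := by
    filter_upwards [hw₀] with a ha
    rw [inv_pow, Real.sq_sqrt ha.le]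
  have hFG : ∀ᵐ a ∂μ, F a * G a = ‖f a‖ := by
    filter_upwards [hw₀] with a ha
    rw [mul_right_comm, mul_inv_cancel₀ (Real.sqrt_pos.2 ha).ne', one_mul]
  have hF : MemLp F 2 μ := (memLp_two_iff_integrable_sq
    (hw.aemeasurable.sqrt.aestronglyMeasurable.mul hf.norm)).2
    (hwf.congr (hF_sq.mono fun _ h => h.symm))
  have hG : MemLp G 2 μ := (memLp_two_iff_integrable_sq
    hw.aemeasurable.sqrt.inv.aestronglyMeasurable).2
    (hw_inv.congr (hG_sq.mono fun _ h => h.symm))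
  have cs := sq_integral_mul_le_integral_sq_mul_integral_sq
    (ae_of_all _ fun a => by positivity) (ae_of_all _ fun a => by positivity)
    hF hG
  rwa [integral_congr_ae hFG, integral_congr_ae hF_sq, integral_congr_ae hG_sq] at cs

end CauchySchwarz

section InvRpow

variable {p a b : ℝ}

theorem integrableOn_inv_rpow_Ioc (hp : p < 1) (ha : 0 ≤ a) :
    IntegrableOn (fun τ : ℝ => (τ ^ p)⁻¹) (Ioc a b) :=
  (intervalIntegral.intervalIntegrable_rpow' (r := -p) (by linarith)).1.congr_fun
    (fun τ hτ => Real.rpow_neg (ha.trans hτ.1.le) p) measurableSet_Ioc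

theorem integral_Ioc_inv_rpow (hp : p < 1) (ha : 0 ≤ a) (hab : a ≤ b) :
    ∫ τ in Ioc a b, (τ ^ p)⁻¹ = (b ^ (1 - p) - a ^ (1 - p)) / (1 - p) := by
  rw [← setIntegral_congr_fun measurableSet_Ioc fun τ hτ => Real.rpow_neg (ha.trans hτ.1.le) p,
    ← intervalIntegral.integral_of_le hab, integral_rpow (Or.inl (by linarith)), neg_add_eq_sub]

end InvRpow

theorem energy_holder_continuity_general (p T E₀ : ℝ) (hp1 : p < 1)
    (V : Type*) [NormedAddCommGroup V] [InnerProductSpace ℝ V]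
    (γ γ' : ℝ → V)
    (hint : IntegrableOn γ' (Set.Icc 0 T))
    (hderiv : ∀ a b : ℝ, 0 ≤ a → a ≤ b → b ≤ T → γ b - γ a = ∫ τ in a..b, γ' τ)
    (hEint : IntervalIntegrable (fun τ => τ ^ p * ‖γ' τ‖ ^ 2) volume 0 T)
    (hE : (∫ τ in (0:ℝ)..T, τ ^ p * ‖γ' τ‖ ^ 2) ≤ E₀) :
    ∀ τ₁ τ₂ : ℝ, 0 ≤ τ₁ → τ₁ ≤ τ₂ → τ₂ ≤ T →
      ‖γ τ₂ - γ τ₁‖ ^ 2 ≤ (E₀ / (1 - p)) * (τ₂ ^ (1 - p) - τ₁ ^ (1 - p)) := by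
  intro τ₁ τ₂ h₀ h₁₂ h₂
  have hweight : ∀ᵐ τ ∂volume.restrict (Ioc τ₁ τ₂), 0 < τ ^ p :=
    ae_restrict_of_forall_mem measurableSet_Ioc fun τ hτ => Real.rpow_pos_of_pos (h₀.trans_lt hτ.1) p
  have henergy : ∫ τ in Ioc τ₁ τ₂, τ ^ p * ‖γ' τ‖ ^ 2 ≤ E₀ := by
    rw [← intervalIntegral.integral_of_le h₁₂]
    refine (intervalIntegral.integral_mono_interval h₀ h₁₂ h₂ ?_ hEint).trans hE
    exact ae_restrict_of_forall_mem measurableSet_Ioc fun τ hτ =>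
      mul_nonneg (Real.rpow_nonneg hτ.1.le p) (sq_nonneg _)
  have hgap : 0 ≤ (τ₂ ^ (1 - p) - τ₁ ^ (1 - p)) / (1 - p) :=
    div_nonneg (sub_nonneg.2 (Real.rpow_le_rpow h₀ h₁₂ (by linarith))) (by linarith)
  calc ‖γ τ₂ - γ τ₁‖ ^ 2 = ‖∫ τ in Ioc τ₁ τ₂, γ' τ‖ ^ 2 := by
        rw [hderiv τ₁ τ₂ h₀ h₁₂ h₂, intervalIntegral.integral_of_le h₁₂]
    _ ≤ (∫ τ in Ioc τ₁ τ₂, ‖γ' τ‖) ^ 2 := by gcongr; exact norm_integral_le_integral_norm _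
    _ ≤ (∫ τ in Ioc τ₁ τ₂, τ ^ p * ‖γ' τ‖ ^ 2) * ∫ τ in Ioc τ₁ τ₂, (τ ^ p)⁻¹ :=
        sq_integral_norm_le_integral_mul_sq_norm_mul_integral_inv
          (hint.mono_set (Ioc_subset_Icc_self.trans (Icc_subset_Icc h₀ h₂))).aestronglyMeasurable
          hweight (hEint.1.mono_set (Ioc_subset_Ioc h₀ h₂)) (integrableOn_inv_rpow_Ioc hp1 h₀)
    _ ≤ E₀ * ((τ₂ ^ (1 - p) - τ₁ ^ (1 - p)) / (1 - p)) := by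
        rw [integral_Ioc_inv_rpow hp1 h₀ h₁₂]; gcongr
    _ = E₀ / (1 - p) * (τ₂ ^ (1 - p) - τ₁ ^ (1 - p)) := by ring

/-- Equicontinuity estimate ((1.22)/(1.42)): a curve `γ : [0,T] → V` into a real
inner product space with integrable derivative `γ'` (i.e. `γ'` is integrable on
`[0,T]` and `γ b - γ a = ∫_a^b γ'` for all `0 ≤ a ≤ b ≤ T`) whose weighted energy
`∫_0^T τ^p ‖γ'(τ)‖² dτ` is at most `E₀` satisfies
`‖γ(τ₂) - γ(τ₁)‖² ≤ (E₀/(1-p)) * (τ₂^{1-p} - τ₁^{1-p})` for all `0 ≤ τ₁ ≤ τ₂ ≤ T`. -/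
theorem energy_holder_continuity (p T E₀ : ℝ) (hp : 0 < p) (hp1 : p < 1)
    (hT : 0 < T) (hE₀ : 0 ≤ E₀)
    (V : Type*) [NormedAddCommGroup V] [InnerProductSpace ℝ V] [CompleteSpace V]
    (γ γ' : ℝ → V)
    (hint : IntegrableOn γ' (Set.Icc 0 T))
    (hderiv : ∀ a b : ℝ, 0 ≤ a → a ≤ b → b ≤ T → γ b - γ a = ∫ τ in a..b, γ' τ)
    (hEint : IntervalIntegrable (fun τ => τ ^ p * ‖γ' τ‖ ^ 2) volume 0 T)
    (hE : (∫ τ in (0:ℝ)..T, τ ^ p * ‖γ' τ‖ ^ 2) ≤ E₀) :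
    ∀ τ₁ τ₂ : ℝ, 0 ≤ τ₁ → τ₁ ≤ τ₂ → τ₂ ≤ T →
      ‖γ τ₂ - γ τ₁‖ ^ 2 ≤ (E₀ / (1 - p)) * (τ₂ ^ (1 - p) - τ₁ ^ (1 - p)) :=
  energy_holder_continuity_general p T E₀ hp1 V γ γ' hint hderiv hEint hE
end

section
/- Let 0 < p < 1, C₁ > 0, S > 0, and let u : [0,S] → ℝ be nonnegative and differentiable with |u′(s)| ≤ C₁·(2·s^{p/(1−p)}·u(s) + s^{3p/(1−p)}/4) for all s ∈ [0,S]. Set C₂ = 2(1−p)C₁ and C₃ = C₂/(8(1+2p)). Then for all s ∈ [0,S], e^{−C₂·s^{1/(1−p)}}·(u(0) − C₃·e^{C₂·s^{1/(1−p)}}·s^{(1+2p)/(1−p)}) ≤ u(s) ≤ e^{C₂·s^{1/(1−p)}}·(u(0) + C₃·s^{(1+2p)/(1−p)}). -/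
/-!
With `φ(s) = C₂ s^{1/(1-p)}` and `ψ(s) = C₃ s^{(1+2p)/(1-p)}` the constants are chosen so that
`φ' = 2 C₁ s^{p/(1-p)}` and `ψ' = C₁ s^{3p/(1-p)} / 4`, i.e. the hypothesis reads
`|u'| ≤ φ' u + ψ'`.
This makes `e^{-φ} u - ψ` nonincreasing and `e^{φ} (u + ψ)` nondecreasing; comparing both with
their value `u(0)` at `s = 0` gives the two bounds.
-/

open Real Set

section Gronwall

variable {D : Set ℝ} {u u' φ φ' ψ ψ' : ℝ → ℝ}

theorem antitoneOn_exp_neg_mul_sub (hD : Convex ℝ D)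
    (hu : ∀ x ∈ D, HasDerivAt u (u' x) x) (hφ : ∀ x ∈ D, HasDerivAt φ (φ' x) x)
    (hψ : ∀ x ∈ D, HasDerivAt ψ (ψ' x) x)
    (hφ_nonneg : ∀ x ∈ D, 0 ≤ φ x) (hψ'_nonneg : ∀ x ∈ D, 0 ≤ ψ' x)
    (hu' : ∀ x ∈ D, u' x ≤ φ' x * u x + ψ' x) :
    AntitoneOn (fun x => exp (-φ x) * u x - ψ x) D := by
  have hderiv : ∀ x ∈ D, HasDerivAt (fun x => exp (-φ x) * u x - ψ x)
      (exp (-φ x) * (u' x - φ' x * u x) - ψ' x) x := fun x hx =>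
    (((hφ x hx).neg.exp.mul (hu x hx)).sub (hψ x hx)).congr_deriv
      (by simp only [Pi.neg_apply]; ring)
  refine antitoneOn_of_hasDerivWithinAt_nonpos hD
    (fun x hx => (hderiv x hx).continuousAt.continuousWithinAt)
    (fun x hx => (hderiv x (interior_subset hx)).hasDerivWithinAt) fun x hx => ?_
  replace hx := interior_subset hx
  have hexp : exp (-φ x) ≤ 1 := exp_le_one_iff.2 (neg_nonpos.2 (hφ_nonneg x hx))
  have hψ' := hψ'_nonneg x hx
  calc exp (-φ x) * (u' x - φ' x * u x) - ψ' x
      ≤ exp (-φ x) * ψ' x - ψ' x := by gcongr; linarith [hu' x hx]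
    _ ≤ 0 := by nlinarith

theorem monotoneOn_exp_mul_add (hD : Convex ℝ D)
    (hu : ∀ x ∈ D, HasDerivAt u (u' x) x) (hφ : ∀ x ∈ D, HasDerivAt φ (φ' x) x)
    (hψ : ∀ x ∈ D, HasDerivAt ψ (ψ' x) x)
    (hφ'_nonneg : ∀ x ∈ D, 0 ≤ φ' x) (hψ_nonneg : ∀ x ∈ D, 0 ≤ ψ x)
    (hu' : ∀ x ∈ D, -(φ' x * u x + ψ' x) ≤ u' x) :
    MonotoneOn (fun x => exp (φ x) * (u x + ψ x)) D := by
  have hderiv : ∀ x ∈ D, HasDerivAt (fun x => exp (φ x) * (u x + ψ x))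
      (exp (φ x) * (u' x + φ' x * u x + ψ' x + φ' x * ψ x)) x := fun x hx =>
    ((hφ x hx).exp.mul ((hu x hx).add (hψ x hx))).congr_deriv
      (by simp only [Pi.add_apply]; ring)
  refine monotoneOn_of_hasDerivWithinAt_nonneg hD
    (fun x hx => (hderiv x hx).continuousAt.continuousWithinAt)
    (fun x hx => (hderiv x (interior_subset hx)).hasDerivWithinAt) fun x hx => ?_
  replace hx := interior_subset hx
  have := mul_nonneg (hφ'_nonneg x hx) (hψ_nonneg x hx)
  exact mul_nonneg (exp_pos _).le (by linarith [hu' x hx])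

theorem hasDerivAt_const_mul_rpow_add_one (c : ℝ) {r : ℝ} (hr : 0 ≤ r) (x : ℝ) :
    HasDerivAt (fun t => c * t ^ (r + 1)) (c * (r + 1) * x ^ r) x :=
  ((hasDerivAt_rpow_const (Or.inr (by linarith))).const_mul c).congr_deriv (by
    rw [add_sub_cancel_right, mul_assoc])

theorem gronwall_rpow_bounds {S a b α β s : ℝ} (ha : 0 ≤ a) (hb : 0 ≤ b)
    (hα : 0 ≤ α) (hβ : 0 ≤ β) (hu : ∀ x ∈ Icc 0 S, HasDerivAt u (u' x) x)
    (hu' : ∀ x ∈ Icc 0 S, |u' x| ≤ a * (α + 1) * x ^ α * u x + b * (β + 1) * x ^ β)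
    (hs : s ∈ Icc 0 S) :
    exp (-(a * s ^ (α + 1))) * u s - b * s ^ (β + 1) ≤ u 0 ∧
      u 0 ≤ exp (a * s ^ (α + 1)) * (u s + b * s ^ (β + 1)) := by
  have h0 : (0 : ℝ) ∈ Icc 0 S := ⟨le_rfl, hs.1.trans hs.2⟩
  have hφ x (_ : x ∈ Icc 0 S) := hasDerivAt_const_mul_rpow_add_one a hα x
  have hψ x (_ : x ∈ Icc 0 S) := hasDerivAt_const_mul_rpow_add_one b hβ x
  have hupper := antitoneOn_exp_neg_mul_sub (convex_Icc 0 S) hu hφ hψ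
    (fun x hx => by have := hx.1; positivity) (fun x hx => by have := hx.1; positivity)
    (fun x hx => (le_abs_self _).trans (hu' x hx)) h0 hs hs.1
  have hlower := monotoneOn_exp_mul_add (convex_Icc 0 S) hu hφ hψ
    (fun x hx => by have := hx.1; positivity) (fun x hx => by have := hx.1; positivity)
    (fun x hx => neg_le_of_abs_le (hu' x hx)) h0 hs hs.1
  have hα1 : α + 1 ≠ 0 := by positivity
  have hβ1 : β + 1 ≠ 0 := by positivity
  simp only [zero_rpow hα1, zero_rpow hβ1, mul_zero, neg_zero, exp_zero, one_mul, sub_zero,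
    add_zero] at hupper hlower
  exact ⟨hupper, hlower⟩

end Gronwall

theorem gronwall_speed_bound_general (p C₁ S : ℝ) (hp : 0 < p) (hp1 : p < 1)
    (hC₁ : 0 < C₁)
    (u u' : ℝ → ℝ)
    (hu_deriv : ∀ s ∈ Set.Icc 0 S, HasDerivAt u (u' s) s)
    (hu_bound : ∀ s ∈ Set.Icc 0 S,
      |u' s| ≤ C₁ * (2 * s ^ (p / (1 - p)) * u s + s ^ (3 * p / (1 - p)) / 4))
    (C₂ C₃ : ℝ) (hC₂ : C₂ = 2 * (1 - p) * C₁) (hC₃ : C₃ = C₂ / (8 * (1 + 2 * p))) :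
    ∀ s ∈ Set.Icc 0 S,
      Real.exp (-C₂ * s ^ (1 / (1 - p))) *
          (u 0 - C₃ * Real.exp (C₂ * s ^ (1 / (1 - p))) * s ^ ((1 + 2 * p) / (1 - p)))
        ≤ u s ∧
      u s ≤ Real.exp (C₂ * s ^ (1 / (1 - p))) *
          (u 0 + C₃ * s ^ ((1 + 2 * p) / (1 - p))) := by
  have h1p : 0 < 1 - p := by linarith
  have hα1 : 1 / (1 - p) = p / (1 - p) + 1 := by field_simp; ring
  have hβ1 : (1 + 2 * p) / (1 - p) = 3 * p / (1 - p) + 1 := by field_simp; ring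
  set α := p / (1 - p)
  set β := 3 * p / (1 - p)
  have hφ' : C₂ * (α + 1) = 2 * C₁ := by rw [← hα1, hC₂]; field_simp
  have hψ' : C₃ * (β + 1) = C₁ / 4 := by rw [← hβ1, hC₃, hC₂]; field_simp; ring
  intro s hs
  obtain ⟨hupper, hlower⟩ :=
    gronwall_rpow_bounds (a := C₂) (b := C₃) (α := α) (β := β)
    (by rw [hC₂]; positivity) (by rw [hC₃, hC₂]; positivity) (by positivity) (by positivity)
    hu_deriv (fun x hx => (hu_bound x hx).trans_eq (by rw [hφ', hψ']; ring)) hs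
  rw [hα1, hβ1]
  constructor
  · rw [neg_mul, exp_neg, inv_mul_le_iff₀ (exp_pos _)]; linarith
  · rw [← inv_mul_le_iff₀ (exp_pos _), ← exp_neg]; linarith

/-- Two-sided Gronwall-type bound (1.17) for the squared speed of an
`L̃_p`-geodesic: if `u : [0,S] → ℝ` is nonnegative and differentiable with
`|u'(s)| ≤ C₁ (2 s^{p/(1-p)} u(s) + s^{3p/(1-p)}/4)`, then with
`C₂ = 2(1-p)C₁` and `C₃ = C₂/(8(1+2p))` one has for all `s ∈ [0,S]`:
`e^{-C₂ s^{1/(1-p)}} (u(0) - C₃ e^{C₂ s^{1/(1-p)}} s^{(1+2p)/(1-p)}) ≤ u(s)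
  ≤ e^{C₂ s^{1/(1-p)}} (u(0) + C₃ s^{(1+2p)/(1-p)})`. -/
theorem gronwall_speed_bound (p C₁ S : ℝ) (hp : 0 < p) (hp1 : p < 1)
    (hC₁ : 0 < C₁) (hS : 0 < S)
    (u u' : ℝ → ℝ)
    (hu_nonneg : ∀ s ∈ Set.Icc 0 S, 0 ≤ u s)
    (hu_deriv : ∀ s ∈ Set.Icc 0 S, HasDerivAt u (u' s) s)
    (hu_bound : ∀ s ∈ Set.Icc 0 S,
      |u' s| ≤ C₁ * (2 * s ^ (p / (1 - p)) * u s + s ^ (3 * p / (1 - p)) / 4))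
    (C₂ C₃ : ℝ) (hC₂ : C₂ = 2 * (1 - p) * C₁) (hC₃ : C₃ = C₂ / (8 * (1 + 2 * p))) :
    ∀ s ∈ Set.Icc 0 S,
      Real.exp (-C₂ * s ^ (1 / (1 - p))) *
          (u 0 - C₃ * Real.exp (C₂ * s ^ (1 / (1 - p))) * s ^ ((1 + 2 * p) / (1 - p)))
        ≤ u s ∧
      u s ≤ Real.exp (C₂ * s ^ (1 / (1 - p))) *
          (u 0 + C₃ * s ^ ((1 + 2 * p) / (1 - p))) :=
  gronwall_speed_bound_general p C₁ S hp hp1 hC₁ u u' hu_deriv hu_bound C₂ C₃ hC₂ hC₃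
end

section
/- Let C₁ > 0, K > 0 and 0 < ε ≤ 1/(√C₁ · K). Let E : [0,ε] → ℝ be differentiable with E(z) > 0 for all z ∈ [0,ε], E(0) ≤ C₁, and |E′(z)| ≤ K·E(z)^{3/2} for all z ∈ [0,ε]. Then E(z) ≤ 4·C₁ for all z ∈ [0,ε]. -/
/-- ODE comparison estimate ((1.31)–(1.33)): if `E : [0,ε] → ℝ` is positive and
differentiable with `E(0) ≤ C₁` and `|E'(z)| ≤ K · E(z)^{3/2}`, and
`ε ≤ 1/(√C₁ · K)`, then `E(z) ≤ 4 C₁` on `[0,ε]`. -/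
theorem energy_doubling_bound (C₁ K ε : ℝ) (hC₁ : 0 < C₁) (hK : 0 < K)
    (hε : 0 < ε) (hεle : ε ≤ 1 / (Real.sqrt C₁ * K))
    (E E' : ℝ → ℝ)
    (hderiv : ∀ z ∈ Set.Icc 0 ε, HasDerivAt E (E' z) z)
    (hpos : ∀ z ∈ Set.Icc 0 ε, 0 < E z)
    (h0 : E 0 ≤ C₁)
    (hbound : ∀ z ∈ Set.Icc 0 ε, |E' z| ≤ K * E z ^ ((3 : ℝ) / 2)) :
    ∀ z ∈ Set.Icc 0 ε, E z ≤ 4 * C₁ := by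
  intro z hz
  have hsC : 0 < Real.sqrt C₁ := Real.sqrt_pos.mpr hC₁
  set G : ℝ → ℝ := fun y => E y ^ (-(1/2) : ℝ) with hGdef
  set G' : ℝ → ℝ := fun y => E' y * (-(1/2)) * E y ^ ((-(1/2) : ℝ) - 1) with hG'def
  have hGderiv : ∀ x ∈ Set.Icc (0:ℝ) ε, HasDerivWithinAt G (G' x) (Set.Icc 0 ε) x := by
    intro x hx
    exact ((hderiv x hx).rpow_const (Or.inl (hpos x hx).ne')).hasDerivWithinAt
  have hGbound : ∀ x ∈ Set.Icc (0:ℝ) ε, ‖G' x‖ ≤ K / 2 := by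
    intro x hx
    have hEx := hpos x hx
    have h1 : ‖G' x‖ = |E' x| * (1/2) * E x ^ ((-(3:ℝ))/2) := by
      have : ((-(1/2) : ℝ) - 1) = (-(3:ℝ))/2 := by norm_num
      rw [hG'def, this]
      rw [Real.norm_eq_abs, abs_mul, abs_mul, abs_neg, abs_of_pos (by positivity : (0:ℝ) < (1/2:ℝ)),
        abs_of_pos (Real.rpow_pos_of_pos hEx _)]
    rw [h1]
    have h2 : |E' x| * (1/2) * E x ^ ((-(3:ℝ))/2)
        ≤ (K * E x ^ ((3:ℝ)/2)) * (1/2) * E x ^ ((-(3:ℝ))/2) := by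
      have := hbound x hx
      have hp : (0:ℝ) < E x ^ ((-(3:ℝ))/2) := Real.rpow_pos_of_pos hEx _
      nlinarith
    refine h2.trans_eq ?_
    have hmul : E x ^ ((-(3:ℝ))/2) * E x ^ ((3:ℝ)/2) = 1 := by
      rw [← Real.rpow_add hEx]; norm_num
    linear_combination (K/2) * hmul
  have hmvt := (convex_Icc (0:ℝ) ε).norm_image_sub_le_of_norm_hasDerivWithin_le
    hGderiv hGbound (Set.left_mem_Icc.mpr hε.le) hz
  -- hmvt : ‖G z - G 0‖ ≤ K/2 * ‖z - 0‖
  have hzε : |z - 0| ≤ ε := by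
    rw [sub_zero, abs_of_nonneg hz.1]; exact hz.2
  have hKε : K * ε ≤ 1 / Real.sqrt C₁ := by
    rw [le_div_iff₀ hsC] at *
    calc K * ε * Real.sqrt C₁ = ε * (Real.sqrt C₁ * K) := by ring
    _ ≤ (1 / (Real.sqrt C₁ * K)) * (Real.sqrt C₁ * K) := by
        apply mul_le_mul_of_nonneg_right hεle (by positivity)
    _ = 1 := by field_simp
  have hG0 : (1 : ℝ) / Real.sqrt C₁ ≤ G 0 := by
    have h := Real.rpow_le_rpow_of_nonpos (hpos 0 (Set.left_mem_Icc.mpr hε.le)) h0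
      (by norm_num : (-(1/2) : ℝ) ≤ 0)
    refine le_trans (le_of_eq ?_) h
    rw [Real.rpow_neg hC₁.le, ← Real.sqrt_eq_rpow, one_div]
  have hdiff : G 0 - G z ≤ K / 2 * ε := by
    have h1 : G 0 - G z ≤ |G z - G 0| := by
      rw [abs_sub_comm]; exact le_abs_self _
    refine h1.trans (hmvt.trans ?_)
    have : ‖z - (0:ℝ)‖ = |z - 0| := rfl
    rw [this]
    exact mul_le_mul_of_nonneg_left hzε (by positivity)
  have hGz : 1 / (2 * Real.sqrt C₁) ≤ G z := by
    have e : 1 / (2 * Real.sqrt C₁) = (1 / Real.sqrt C₁) / 2 := by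
      rw [one_div, mul_inv, one_div]; ring
    have hKε2 : K / 2 * ε ≤ 1 / (2 * Real.sqrt C₁) := by
      rw [e]; linarith
    linarith [hG0, hdiff, hKε2, e]
  -- conclude
  have hEz := hpos z hz
  have hGzeq : G z = (Real.sqrt (E z))⁻¹ := by
    rw [hGdef]
    simp only
    rw [show (-(1/2) : ℝ) = -(1/2) from rfl, Real.rpow_neg hEz.le, ← Real.sqrt_eq_rpow]
  have hsE : 0 < Real.sqrt (E z) := Real.sqrt_pos.mpr hEz
  have hsqrtle : Real.sqrt (E z) ≤ 2 * Real.sqrt C₁ := by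
    rw [hGzeq] at hGz
    have h1 : Real.sqrt (E z) * (1 / (2 * Real.sqrt C₁)) ≤ 1 := by
      calc Real.sqrt (E z) * (1 / (2 * Real.sqrt C₁))
          ≤ Real.sqrt (E z) * (Real.sqrt (E z))⁻¹ :=
            mul_le_mul_of_nonneg_left hGz hsE.le
      _ = 1 := mul_inv_cancel₀ hsE.ne'
    have h2 : Real.sqrt (E z) = (Real.sqrt (E z) * (1 / (2 * Real.sqrt C₁))) * (2 * Real.sqrt C₁) := by
      field_simp
    rw [h2]
    calc (Real.sqrt (E z) * (1 / (2 * Real.sqrt C₁))) * (2 * Real.sqrt C₁)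
        ≤ 1 * (2 * Real.sqrt C₁) := mul_le_mul_of_nonneg_right h1 (by positivity)
    _ = 2 * Real.sqrt C₁ := one_mul _
  calc E z = Real.sqrt (E z) * Real.sqrt (E z) := (Real.mul_self_sqrt hEz.le).symm
  _ ≤ (2 * Real.sqrt C₁) * (2 * Real.sqrt C₁) := by nlinarith
  _ = 4 * C₁ := by rw [mul_mul_mul_comm]; norm_num [Real.mul_self_sqrt hC₁.le]
end

section
/- Let 0 < p < 1, A ≥ 0, C₂ > 0, C₃ > 0, τ₀ > 0, and let u : (0, τ₀] → ℝ be continuous and satisfy e^{−C₂·ρ}·ρ^{−2p}·(A − C₃·e^{C₂·ρ}·ρ^{1+2p}) ≤ u(ρ) ≤ e^{C₂·ρ}·ρ^{−2p}·(A + C₃·ρ^{1+2p}) for all ρ ∈ (0, τ₀]. Then ρ ↦ ρ^p·u(ρ) is integrable on (0, τ) for every τ ∈ (0, τ₀], and lim_{τ→0⁺} ((1−p)/τ^{1−p}) · ∫_0^τ ρ^p·u(ρ) dρ = A. -/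
open MeasureTheory Filter Topology Set

/-!
Since `∫₀^τ ρ^{-p} dρ = τ^{1-p}/(1-p)`, the quantity `((1-p)/τ^{1-p}) ∫₀^τ ρ^p u(ρ) dρ` is the mean
of `ρ^{2p} u(ρ)` over `(0, τ)` against the probability density proportional to `ρ^{-p}`. The
hypotheses squeeze `ρ^{2p} u(ρ)` between two functions that are continuous on all of `ℝ` and equal
to `A` at `0`. Hence `ρ^{2p} u(ρ)` is bounded, so `ρ^p u(ρ)` is dominated by a multiple of the
integrable `ρ^{-p}`, and it tends to `A` as `ρ → 0⁺`, so its means over `(0, τ)` do as well.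
-/

lemma rpow_neg_mul_rpow_mul {ρ : ℝ} (hρ : 0 < ρ) (c x : ℝ) : ρ ^ (-c) * (ρ ^ c * x) = x := by
  rw [← mul_assoc, ← Real.rpow_add hρ, neg_add_cancel, Real.rpow_zero, one_mul]

lemma rpow_mul_rpow_mul_rpow_neg_two_mul {ρ : ℝ} (hρ : 0 < ρ) (p a b : ℝ) :
    ρ ^ p * (ρ ^ p * (a * ρ ^ (-(2 * p)) * b)) = a * b := by
  have h : ρ ^ p * ρ ^ p * ρ ^ (-(2 * p)) = 1 := by
    rw [← Real.rpow_add hρ, ← Real.rpow_add hρ, show p + p + -(2 * p) = 0 by ring, Real.rpow_zero]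
  linear_combination a * b * h

lemma integrableOn_Ioo_rpow_neg {c : ℝ} (hc : c < 1) (τ : ℝ) :
    IntegrableOn (fun ρ : ℝ => ρ ^ (-c)) (Ioo 0 τ) :=
  (intervalIntegral.intervalIntegrable_rpow' (by linarith) (a := 0) (b := τ)).1.mono_set
    Ioo_subset_Ioc_self

lemma integral_Ioo_rpow_neg {c τ : ℝ} (hc : c < 1) (hτ : 0 ≤ τ) :
    ∫ ρ in Ioo 0 τ, ρ ^ (-c) = τ ^ (1 - c) / (1 - c) := by
  rw [← integral_Ioc_eq_integral_Ioo, ← intervalIntegral.integral_of_le hτ,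
    integral_rpow (Or.inl (by linarith)), Real.zero_rpow (by linarith), neg_add_eq_sub, sub_zero]

lemma integrableOn_Ioo_of_abs_rpow_mul_le {g : ℝ → ℝ} {c M τ : ℝ} (hc : c < 1)
    (hg : AEStronglyMeasurable g (volume.restrict (Ioo 0 τ)))
    (hbound : ∀ ρ ∈ Ioo 0 τ, |ρ ^ c * g ρ| ≤ M) : IntegrableOn g (Ioo 0 τ) := by
  refine Integrable.mono' ((integrableOn_Ioo_rpow_neg hc τ).const_mul M) hg <|
    (ae_restrict_iff' measurableSet_Ioo).2 (Eventually.of_forall fun ρ hρ => ?_)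
  calc ‖g ρ‖ = ρ ^ (-c) * |ρ ^ c * g ρ| := by
        conv_lhs => rw [← rpow_neg_mul_rpow_mul hρ.1 c (g ρ)]
        rw [Real.norm_eq_abs, abs_mul, abs_of_pos (Real.rpow_pos_of_pos hρ.1 _)]
    _ ≤ M * ρ ^ (-c) := by
        rw [mul_comm M]
        exact mul_le_mul_of_nonneg_left (hbound ρ hρ) (Real.rpow_pos_of_pos hρ.1 _).le

lemma abs_rpow_weighted_mean_sub_le {g : ℝ → ℝ} {c L η τ : ℝ} (hc : c < 1) (hτ : 0 < τ)
    (hg : IntegrableOn g (Ioo 0 τ)) (hη : ∀ ρ ∈ Ioo 0 τ, |ρ ^ c * g ρ - L| ≤ η) :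
    |(1 - c) / τ ^ (1 - c) * (∫ ρ in Ioo 0 τ, g ρ) - L| ≤ η := by
  have hw := integrableOn_Ioo_rpow_neg hc τ
  have hτc : 0 < τ ^ (1 - c) := Real.rpow_pos_of_pos hτ _
  have hc' : 0 < 1 - c := by linarith
  have hdev : ‖∫ ρ in Ioo 0 τ, (g ρ - L * ρ ^ (-c))‖ ≤ ∫ ρ in Ioo 0 τ, η * ρ ^ (-c) := by
    refine norm_integral_le_of_norm_le (hw.const_mul η) <|
      (ae_restrict_iff' measurableSet_Ioo).2 (Eventually.of_forall fun ρ hρ => ?_)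
    calc ‖g ρ - L * ρ ^ (-c)‖ = ρ ^ (-c) * |ρ ^ c * g ρ - L| := by
          have h : g ρ - L * ρ ^ (-c) = ρ ^ (-c) * (ρ ^ c * g ρ - L) := by
            rw [mul_sub, rpow_neg_mul_rpow_mul hρ.1, mul_comm L]
          rw [h, Real.norm_eq_abs, abs_mul, abs_of_pos (Real.rpow_pos_of_pos hρ.1 _)]
      _ ≤ η * ρ ^ (-c) := by
          rw [mul_comm η]
          exact mul_le_mul_of_nonneg_left (hη ρ hρ) (Real.rpow_pos_of_pos hρ.1 _).le
  rw [integral_sub hg (hw.const_mul L), integral_const_mul, integral_const_mul,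
    integral_Ioo_rpow_neg hc hτ.le, Real.norm_eq_abs] at hdev
  have hN : (1 - c) / τ ^ (1 - c) * (τ ^ (1 - c) / (1 - c)) = 1 := by field_simp
  calc |(1 - c) / τ ^ (1 - c) * (∫ ρ in Ioo 0 τ, g ρ) - L|
      = (1 - c) / τ ^ (1 - c) * |(∫ ρ in Ioo 0 τ, g ρ) - L * (τ ^ (1 - c) / (1 - c))| := by
        rw [← abs_of_pos (div_pos hc' hτc), ← abs_mul, abs_of_pos (div_pos hc' hτc)]
        congr 1
        linear_combination L * hN
    _ ≤ (1 - c) / τ ^ (1 - c) * (η * (τ ^ (1 - c) / (1 - c))) := by gcongr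
    _ = η := by linear_combination η * hN

theorem tendsto_rpow_weighted_mean {g : ℝ → ℝ} {c L τ₀ : ℝ} (hc : c < 1) (hτ₀ : 0 < τ₀)
    (hg : IntegrableOn g (Ioo 0 τ₀)) (hlim : Tendsto (fun ρ => ρ ^ c * g ρ) (𝓝[>] 0) (𝓝 L)) :
    Tendsto (fun τ => (1 - c) / τ ^ (1 - c) * ∫ ρ in Ioo 0 τ, g ρ) (𝓝[>] 0) (𝓝 L) := by
  refine Metric.tendsto_nhds.2 fun ε hε => ?_
  obtain ⟨δ, hδ, hclose⟩ : ∃ δ > 0, ∀ ρ ∈ Ioo 0 δ, |ρ ^ c * g ρ - L| ≤ ε / 2 := by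
    obtain ⟨δ, hδ, hsub⟩ := mem_nhdsGT_iff_exists_Ioo_subset.1
      (hlim (Metric.closedBall_mem_nhds L (half_pos hε)))
    exact ⟨δ, hδ, fun ρ hρ => by simpa [Real.dist_eq] using hsub hρ⟩
  filter_upwards [Ioo_mem_nhdsGT (lt_min hδ hτ₀)] with τ hτ
  have hτδ : τ ≤ δ := hτ.2.le.trans (min_le_left _ _)
  have hττ₀ : τ ≤ τ₀ := hτ.2.le.trans (min_le_right _ _)
  rw [Real.dist_eq]
  exact (abs_rpow_weighted_mean_sub_le hc hτ.1 (hg.mono_set (Ioo_subset_Ioo_right hττ₀))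
    fun ρ hρ => hclose ρ ⟨hρ.1, hρ.2.trans_le hτδ⟩).trans_lt (half_lt_self hε)

lemma exists_abs_le_of_continuous_squeeze {f lo hi : ℝ → ℝ} {a b : ℝ} (hlo : Continuous lo)
    (hhi : Continuous hi) (hf : ∀ x ∈ Ioc a b, lo x ≤ f x ∧ f x ≤ hi x) :
    ∃ M, ∀ x ∈ Ioc a b, |f x| ≤ M := by
  obtain ⟨Mlo, hMlo⟩ := isCompact_Icc.exists_bound_of_continuousOn hlo.continuousOn
  obtain ⟨Mhi, hMhi⟩ := isCompact_Icc.exists_bound_of_continuousOn hhi.continuousOn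
  refine ⟨max Mlo Mhi, fun x hx => ?_⟩
  have hx' := Ioc_subset_Icc_self hx
  calc |f x| ≤ max |lo x| |hi x| := abs_le_max_abs_abs (hf x hx).1 (hf x hx).2
    _ ≤ max Mlo Mhi := max_le_max (hMlo x hx') (hMhi x hx')

theorem reduced_distance_initial_limit_general (p A C₂ C₃ τ₀ : ℝ) (hp : 0 < p)
    (hp1 : p < 1) (hτ₀ : 0 < τ₀)
    (u : ℝ → ℝ) (hu : ContinuousOn u (Set.Ioc 0 τ₀))
    (hlow : ∀ ρ ∈ Set.Ioc 0 τ₀,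
      Real.exp (-C₂ * ρ) * ρ ^ (-(2 * p)) * (A - C₃ * Real.exp (C₂ * ρ) * ρ ^ (1 + 2 * p))
        ≤ u ρ)
    (hup : ∀ ρ ∈ Set.Ioc 0 τ₀,
      u ρ ≤ Real.exp (C₂ * ρ) * ρ ^ (-(2 * p)) * (A + C₃ * ρ ^ (1 + 2 * p))) :
    (∀ τ ∈ Set.Ioc 0 τ₀,
      IntegrableOn (fun ρ => ρ ^ p * u ρ) (Set.Ioo 0 τ)) ∧
    Filter.Tendsto
      (fun τ => ((1 - p) / τ ^ (1 - p)) * ∫ ρ in Set.Ioo 0 τ, ρ ^ p * u ρ)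
      (nhdsWithin 0 (Set.Ioi 0)) (nhds A) := by
  set lo : ℝ → ℝ := fun ρ => Real.exp (-C₂ * ρ) * (A - C₃ * Real.exp (C₂ * ρ) * ρ ^ (1 + 2 * p))
  set hi : ℝ → ℝ := fun ρ => Real.exp (C₂ * ρ) * (A + C₃ * ρ ^ (1 + 2 * p))
  have hpow : Continuous fun ρ : ℝ => ρ ^ (1 + 2 * p) := Real.continuous_rpow_const (by linarith)
  have hlo : Continuous lo := by fun_prop
  have hhi : Continuous hi := by fun_prop
  have hsq : ∀ ρ ∈ Ioc 0 τ₀, lo ρ ≤ ρ ^ p * (ρ ^ p * u ρ) ∧ ρ ^ p * (ρ ^ p * u ρ) ≤ hi ρ :=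
    fun ρ hρ => by
      have key := rpow_mul_rpow_mul_rpow_neg_two_mul hρ.1 p
      have hρp := Real.rpow_nonneg hρ.1.le p
      exact ⟨(key _ _).symm.trans_le
          (mul_le_mul_of_nonneg_left (mul_le_mul_of_nonneg_left (hlow ρ hρ) hρp) hρp),
        (mul_le_mul_of_nonneg_left (mul_le_mul_of_nonneg_left (hup ρ hρ) hρp) hρp).trans_eq
          (key _ _)⟩
  obtain ⟨M, hM⟩ := exists_abs_le_of_continuous_squeeze hlo hhi hsq
  have hint : IntegrableOn (fun ρ => ρ ^ p * u ρ) (Ioo 0 τ₀) :=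
    integrableOn_Ioo_of_abs_rpow_mul_le hp1
      (((continuousOn_id.rpow_const fun ρ hρ => Or.inl hρ.1.ne').mul
        (hu.mono Ioo_subset_Ioc_self)).aestronglyMeasurable measurableSet_Ioo)
      fun ρ hρ => hM ρ (Ioo_subset_Ioc_self hρ)
  refine ⟨fun τ hτ => hint.mono_set (Ioo_subset_Ioo_right hτ.2),
    tendsto_rpow_weighted_mean hp1 hτ₀ hint ?_⟩
  have hzero : (0 : ℝ) ^ (1 + 2 * p) = 0 := Real.zero_rpow (by linarith)
  have htends : ∀ f : ℝ → ℝ, Continuous f → f 0 = A → Tendsto f (𝓝[>] 0) (𝓝 A) :=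
    fun f hf hf0 => hf0 ▸ hf.continuousWithinAt.tendsto
  refine tendsto_of_tendsto_of_tendsto_of_le_of_le' (htends lo hlo (by simp [lo, hzero]))
    (htends hi hhi (by simp [hi, hzero])) ?_ ?_
  · filter_upwards [Ioc_mem_nhdsGT hτ₀] with ρ hρ using (hsq ρ hρ).1
  · filter_upwards [Ioc_mem_nhdsGT hτ₀] with ρ hρ using (hsq ρ hρ).2

/-- Squeeze computation ((4.10)–(4.14)) behind Lemma 4.2: if a continuous
function `u` on `(0, τ₀]` satisfies the two-sided bound
`e^{-C₂ρ} ρ^{-2p} (A - C₃ e^{C₂ρ} ρ^{1+2p}) ≤ u(ρ) ≤ e^{C₂ρ} ρ^{-2p} (A + C₃ ρ^{1+2p})`,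
then `ρ ↦ ρ^p u(ρ)` is integrable on `(0,τ)` for every `τ ∈ (0, τ₀]` and
`((1-p)/τ^{1-p}) ∫_0^τ ρ^p u(ρ) dρ → A` as `τ → 0⁺`. -/
theorem reduced_distance_initial_limit (p A C₂ C₃ τ₀ : ℝ) (hp : 0 < p)
    (hp1 : p < 1) (hA : 0 ≤ A) (hC₂ : 0 < C₂) (hC₃ : 0 < C₃) (hτ₀ : 0 < τ₀)
    (u : ℝ → ℝ) (hu : ContinuousOn u (Set.Ioc 0 τ₀))
    (hlow : ∀ ρ ∈ Set.Ioc 0 τ₀,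
      Real.exp (-C₂ * ρ) * ρ ^ (-(2 * p)) * (A - C₃ * Real.exp (C₂ * ρ) * ρ ^ (1 + 2 * p))
        ≤ u ρ)
    (hup : ∀ ρ ∈ Set.Ioc 0 τ₀,
      u ρ ≤ Real.exp (C₂ * ρ) * ρ ^ (-(2 * p)) * (A + C₃ * ρ ^ (1 + 2 * p))) :
    (∀ τ ∈ Set.Ioc 0 τ₀,
      IntegrableOn (fun ρ => ρ ^ p * u ρ) (Set.Ioo 0 τ)) ∧
    Filter.Tendsto
      (fun τ => ((1 - p) / τ ^ (1 - p)) * ∫ ρ in Set.Ioo 0 τ, ρ ^ p * u ρ)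
      (nhdsWithin 0 (Set.Ioi 0)) (nhds A) :=
  reduced_distance_initial_limit_general p A C₂ C₃ τ₀ hp hp1 hτ₀ u hu hlow hup
end
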